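/- Let H be a complex Hilbert space, M ⊆ B(H) a von Neumann algebra, M_{sa} = {x ∈ M : x* = x} its self-adjoint part (a real Banach space), and M_*^{sa} = {ω ∈ M_* : ω(x*) = conjugate of ω(x) for all x ∈ M} the self-adjoint part of the predual (a real Banach space). Then the map Ψ : M_{sa} → (M_*^{sa})* defined by Ψ(x)(ω) = Re(ω(x)) is a surjective real-linear isometry onto the dual of the real Banach space M_*^{sa}. -/

import Mathlib

/-!
Ψ(x) has norm at most ‖x‖ since |Re ω(x)| ≤ ‖ω‖‖x‖. Conversely, for self-adjoint `x` the norm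
is the supremum of the Rayleigh quotients `Re ⟪x ξ, ξ⟫ / ‖ξ‖²`, and `Re ⟪x ξ, ξ⟫ = Ψ(x)(ω_{ξ,ξ})`
with `ω_{ξ,ξ} ∈ M_*^{sa}` of norm at most `‖ξ‖²`.

For surjectivity, extend `f` by Hahn–Banach to a real functional on `M_*` and complexify it to
`F ∈ (M_*)*`. The bounded sesquilinear form `(ξ, η) ↦ F(ω_{ξ,η})` is represented by an operator
`T` commuting with `M'`, so `T ∈ M` by the bicommutant theorem, and `F ω = ω(T)` because the
vector functionals span a dense subspace of `M_*`. Finally `ω(x*) = conj ω(x)` on `M_*^{sa}` gives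
`Re ω(T) = Re ω(Re T)`, so `Re T` is a self-adjoint preimage of `f`.
-/

set_option synthInstance.maxHeartbeats 1000000
set_option maxHeartbeats 1000000

noncomputable section

namespace Paper

open scoped ComplexConjugate

variable {H : Type*} [NormedAddCommGroup H] [InnerProductSpace ℂ H] [CompleteSpace H]

variable (M : VonNeumannAlgebra H)

/-- The von Neumann algebra `M` regarded as a closed subspace of `B(H)`;
its subtype `↥(carrier M)` is the Banach space `M`. -/
def carrier : Submodule ℂ (H →L[ℂ] H) := M.toStarSubalgebra.toSubalgebra.toSubmodule

theorem mem_carrier {x : H →L[ℂ] H} : x ∈ carrier M ↔ x ∈ M := Iff.rfl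

instance (priority := 10000) : NormedAddCommGroup ↥(carrier M) := inferInstance
instance (priority := 10000) : NormedSpace ℂ ↥(carrier M) := inferInstance
instance (priority := 10000) : NormedAddCommGroup (↥(carrier M) →L[ℂ] ℂ) := inferInstance
instance (priority := 10000) : NormedSpace ℂ (↥(carrier M) →L[ℂ] ℂ) := inferInstance
instance (priority := 10000) : ContinuousAdd (↥(carrier M) →L[ℂ] ℂ) := by
  have h : IsTopologicalAddGroup (↥(carrier M) →L[ℂ] ℂ) := inferInstance
  exact h.toContinuousAdd

/-- The vector functional `ω_{ξ,η} : x ↦ ⟪x ξ, η⟫` (inner product linear in the first slot,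
i.e. `⟪u, v⟫ = inner v u` in Mathlib's convention), as a continuous linear functional on `M`. -/
def vecFunctional (ξ η : H) : ↥(carrier M) →L[ℂ] ℂ :=
  (innerSL ℂ η).comp ((ContinuousLinearMap.apply ℂ H ξ).comp (carrier M).subtypeL)

theorem vecFunctional_apply (ξ η : H) (x : ↥(carrier M)) :
    vecFunctional M ξ η x = inner ℂ η ((x : H →L[ℂ] H) ξ) := rfl

/-- The predual `M_*` of `M`: the norm-closed linear span, inside the dual of `M`,
of the vector functionals `ω_{ξ,η}`. -/
def predual : Submodule ℂ (↥(carrier M) →L[ℂ] ℂ) :=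
  (Submodule.span ℂ {φ | ∃ ξ η : H, φ = vecFunctional M ξ η}).topologicalClosure

theorem vecFunctional_mem_predual (ξ η : H) : vecFunctional M ξ η ∈ predual M :=
  Submodule.le_topologicalClosure _ (Submodule.subset_span ⟨ξ, η, rfl⟩)

instance (priority := 10000) : NormedAddCommGroup ↥(predual M) := inferInstance
instance (priority := 10000) : NormedSpace ℂ ↥(predual M) := inferInstance
instance (priority := 10000) : NormedSpace ℝ ↥(predual M) := inferInstance
instance (priority := 10000) : NormedAddCommGroup (↥(predual M) →L[ℂ] ℂ) := inferInstance
instance (priority := 10000) : NormedSpace ℂ (↥(predual M) →L[ℂ] ℂ) := inferInstance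

/-- a projection belonging to `M` -/
def IsProjectionIn (p : H →L[ℂ] H) : Prop := p ∈ M ∧ IsSelfAdjoint p ∧ p * p = p

/-- `M` is σ-finite: every family of pairwise orthogonal nonzero projections in `M`
is countable. -/
def SigmaFinite : Prop :=
  ∀ P : Set (H →L[ℂ] H),
    (∀ p ∈ P, IsProjectionIn M p ∧ p ≠ 0) →
    (∀ p ∈ P, ∀ q ∈ P, p ≠ q → p * q = 0) →
    P.Countable

/-- A projection `q ∈ M` is σ-finite if every family of pairwise orthogonal nonzero
projections `p ∈ M` with `p = q p q` is countable. -/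
def IsSigmaFiniteProjection (q : H →L[ℂ] H) : Prop :=
  IsProjectionIn M q ∧
    ∀ P : Set (H →L[ℂ] H),
      (∀ p ∈ P, IsProjectionIn M p ∧ p ≠ 0 ∧ p = q * p * q) →
      (∀ p ∈ P, ∀ r ∈ P, p ≠ r → p * r = 0) →
      P.Countable

/-- `ξ` is a generating vector for the projection `p ∈ M`:
the set `M'ξ = {a ξ : a ∈ M'}` is dense in `pH`, the range of `p`. -/
def IsGeneratingVector (p : H →L[ℂ] H) (ξ : H) : Prop :=
  closure {v : H | ∃ a ∈ M.commutant, v = a ξ} = Set.range p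

/-- a cyclic projection in `M` -/
def IsCyclicProjection (p : H →L[ℂ] H) : Prop :=
  IsProjectionIn M p ∧ ∃ ξ : H, IsGeneratingVector M p ξ

/-- The self-adjoint part `M_*^{sa}` of the predual: those `ω ∈ M_*` with
`ω (x*) = conj (ω x)` for all `x ∈ M`; a real-linear subspace of `M_*`. -/
def predualSA : Submodule ℝ ↥(predual M) where
  carrier := {ω | ∀ (x : H →L[ℂ] H) (hx : x ∈ M),
    (ω : ↥(carrier M) →L[ℂ] ℂ) ⟨star x, (mem_carrier M).mpr (star_mem hx)⟩ =
      conj ((ω : ↥(carrier M) →L[ℂ] ℂ) ⟨x, hx⟩)}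
  add_mem' := by
    intro a b ha hb x hx
    simp only [Submodule.coe_add, ContinuousLinearMap.add_apply, ha x hx, hb x hx, map_add]
  zero_mem' := by
    intro x hx
    simp only [ZeroMemClass.coe_zero, ContinuousLinearMap.zero_apply, map_zero]
  smul_mem' := by
    intro r ω hω x hx
    simp only [SetLike.val_smul_of_tower, ContinuousLinearMap.coe_smul', Pi.smul_apply, hω x hx]
    rw [show (conj ((ω : ↥(carrier M) →L[ℂ] ℂ) ⟨x, hx⟩)) = star ((ω : ↥(carrier M) →L[ℂ] ℂ) ⟨x, hx⟩) from rfl,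
      show (conj (r • (ω : ↥(carrier M) →L[ℂ] ℂ) ⟨x, hx⟩)) = star (r • (ω : ↥(carrier M) →L[ℂ] ℂ) ⟨x, hx⟩) from rfl,
      star_smul, star_trivial r]

instance (priority := 10000) : NormedAddCommGroup ↥(predualSA M) := inferInstance
instance (priority := 10000) : NormedSpace ℝ ↥(predualSA M) := inferInstance
instance (priority := 10000) : NormedAddCommGroup (↥(predualSA M) →L[ℝ] ℝ) := inferInstance
instance (priority := 10000) : NormedSpace ℝ (↥(predualSA M) →L[ℝ] ℝ) := inferInstance


/-- The map `Ψ : M_{sa} → (M_*^{sa})^*`, `Ψ(x)(ω) = Re (ω x)`. -/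
def Psi (m : ↥(carrier M)) : ↥(predualSA M) →L[ℝ] ℝ :=
  (Complex.reCLM.comp
    (((ContinuousLinearMap.apply ℂ ℂ m).restrictScalars ℝ).comp
      ((predual M).subtypeL.restrictScalars ℝ))).comp (predualSA M).subtypeL

open scoped ComplexStarModule

theorem norm_vecFunctional_le (ξ η : H) : ‖vecFunctional M ξ η‖ ≤ ‖ξ‖ * ‖η‖ :=
  ContinuousLinearMap.opNorm_le_bound _ (by positivity) fun x =>
    calc ‖inner ℂ η ((x : H →L[ℂ] H) ξ)‖ ≤ ‖η‖ * (‖(x : H →L[ℂ] H)‖ * ‖ξ‖) :=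
          (norm_inner_le_norm _ _).trans (by gcongr; exact (x : H →L[ℂ] H).le_opNorm ξ)
      _ = ‖ξ‖ * ‖η‖ * ‖x‖ := by rw [Submodule.coe_norm]; ring

def vecFunctionalSL : H →L⋆[ℂ] H →L[ℂ] ↥(predual M) :=
  LinearMap.mkContinuous₂
    (LinearMap.mk₂'ₛₗ (starRingEnd ℂ) (RingHom.id ℂ)
      (fun η ξ => ⟨vecFunctional M ξ η, vecFunctional_mem_predual M ξ η⟩)
      (fun _ _ _ => by ext; simp [vecFunctional_apply])
      (fun _ _ _ => by ext; simp [vecFunctional_apply, mul_comm])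
      (fun _ _ _ => by ext; simp [vecFunctional_apply])
      (fun _ _ _ => by ext; simp [vecFunctional_apply]))
    1 fun η ξ => by
      rw [one_mul, mul_comm]
      exact norm_vecFunctional_le M ξ η

@[simp]
theorem coe_vecFunctionalSL_apply (η ξ : H) :
    (vecFunctionalSL M η ξ : ↥(carrier M) →L[ℂ] ℂ) = vecFunctional M ξ η := rfl

theorem dense_span_range_vecFunctionalSL :
    Dense (Submodule.span ℂ (Set.range fun p : H × H => vecFunctionalSL M p.1 p.2) :
      Set ↥(predual M)) := by
  refine Topology.IsInducing.subtypeVal.dense_iff.mpr fun ω => ?_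
  rw [← Submodule.coe_subtype, ← Submodule.map_coe, Submodule.map_span, ← Set.range_comp]
  have hrange : Set.range ((predual M).subtype ∘ fun p : H × H => vecFunctionalSL M p.1 p.2) =
      {φ | ∃ ξ η : H, φ = vecFunctional M ξ η} := by
    ext φ
    simpa [eq_comm] using exists_comm
  rw [hrange]
  exact ω.2

theorem dual_predual_ext {F G : ↥(predual M) →L[ℂ] ℂ}
    (h : ∀ η ξ, F (vecFunctionalSL M η ξ) = G (vecFunctionalSL M η ξ)) : F = G :=
  ContinuousLinearMap.ext_on (dense_span_range_vecFunctionalSL M)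
    (Set.forall_mem_range.2 fun p => h p.1 p.2)

theorem vecFunctional_apply_left_of_mem_commutant {a : H →L[ℂ] H} (ha : a ∈ M.commutant)
    (ξ η : H) : vecFunctional M (a ξ) η = vecFunctional M ξ (ContinuousLinearMap.adjoint a η) := by
  ext x
  have hxa : (x : H →L[ℂ] H) * a = a * x := VonNeumannAlgebra.mem_commutant_iff.mp ha _ x.2
  rw [vecFunctional_apply, vecFunctional_apply, ContinuousLinearMap.adjoint_inner_left,
    ← mul_apply_eq_comp, hxa, mul_apply_eq_comp]

variable {M} in
def dualToOperator (F : ↥(predual M) →L[ℂ] ℂ) : H →L[ℂ] H :=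
  ContinuousLinearMap.adjoint (InnerProductSpace.continuousLinearMapOfBilin
    ((ContinuousLinearMap.compL ℂ H (predual M) ℂ F).comp (vecFunctionalSL M)))

theorem inner_dualToOperator (F : ↥(predual M) →L[ℂ] ℂ) (η ξ : H) :
    inner ℂ η (dualToOperator F ξ) = F (vecFunctionalSL M η ξ) := by
  rw [dualToOperator, ContinuousLinearMap.adjoint_inner_right,
    InnerProductSpace.continuousLinearMapOfBilin_apply]
  rfl

theorem dualToOperator_mem (F : ↥(predual M) →L[ℂ] ℂ) : dualToOperator F ∈ M := by
  suffices h : dualToOperator F ∈ M.commutant.commutant by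
    rwa [VonNeumannAlgebra.commutant_commutant] at h
  refine VonNeumannAlgebra.mem_commutant_iff.mpr fun a ha => ?_
  ext ξ
  refine ext_inner_left ℂ fun η => ?_
  have hvec : vecFunctionalSL M η (a ξ) = vecFunctionalSL M (ContinuousLinearMap.adjoint a η) ξ :=
    Subtype.ext (vecFunctional_apply_left_of_mem_commutant M ha ξ η)
  rw [mul_apply_eq_comp, mul_apply_eq_comp, inner_dualToOperator, hvec,
    ← inner_dualToOperator, ContinuousLinearMap.adjoint_inner_left]

theorem apply_eq_apply_dualToOperator (F : ↥(predual M) →L[ℂ] ℂ) (ω : ↥(predual M)) :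
    F ω = (ω : ↥(carrier M) →L[ℂ] ℂ) ⟨dualToOperator F, dualToOperator_mem M F⟩ := by
  have hF : F = (ContinuousLinearMap.apply ℂ ℂ ⟨dualToOperator F, dualToOperator_mem M F⟩).comp
      (predual M).subtypeL :=
    dual_predual_ext M fun η ξ => (inner_dualToOperator M F η ξ).symm
  exact congr($hF ω)

theorem _root_.realPart_mem {A S : Type*} [AddCommGroup A] [Module ℂ A] [StarAddMonoid A]
    [StarModule ℂ A] [SetLike S A] [AddMemClass S A] [StarMemClass S A] [SMulMemClass S ℂ A]
    {s : S} {a : A} (ha : a ∈ s) : (ℜ a : A) ∈ s := by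
  rw [realPart_apply_coe, ← Complex.coe_smul]
  exact SMulMemClass.smul_mem _ (add_mem ha (star_mem ha))

theorem realPart_mem_carrier {a : H →L[ℂ] H} (ha : a ∈ M) : (ℜ a : H →L[ℂ] H) ∈ carrier M :=
  realPart_mem (s := M.toStarSubalgebra) ha

theorem Psi_realPart {a : H →L[ℂ] H} (ha : a ∈ M) :
    Psi M ⟨ℜ a, realPart_mem_carrier M ha⟩ = Psi M ⟨a, ha⟩ := by
  ext ω
  have hm : (⟨ℜ a, realPart_mem_carrier M ha⟩ : ↥(carrier M)) =
      (2 : ℝ)⁻¹ • (⟨a, ha⟩ + ⟨star a, (star_mem ha : star a ∈ M)⟩) :=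
    Subtype.ext (realPart_apply_coe _)
  change ((ω : ↥(carrier M) →L[ℂ] ℂ) _).re = ((ω : ↥(carrier M) →L[ℂ] ℂ) _).re
  rw [hm, ContinuousLinearMap.map_smul_of_tower, map_add, Complex.smul_re, Complex.add_re,
    ω.2 a ha, Complex.conj_re, smul_eq_mul]
  ring

theorem norm_Psi_le (m : ↥(carrier M)) : ‖Psi M m‖ ≤ ‖m‖ :=
  ContinuousLinearMap.opNorm_le_bound _ (norm_nonneg m) fun ω =>
    calc ‖Psi M m ω‖ ≤ ‖((ω : ↥(predual M)) : ↥(carrier M) →L[ℂ] ℂ) m‖ :=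
          Complex.abs_re_le_norm _
      _ ≤ ‖((ω : ↥(predual M)) : ↥(carrier M) →L[ℂ] ℂ)‖ * ‖m‖ :=
          ContinuousLinearMap.le_opNorm _ _
      _ = ‖m‖ * ‖ω‖ := mul_comm _ _

theorem vecFunctionalSL_self_mem_predualSA (ξ : H) : vecFunctionalSL M ξ ξ ∈ predualSA M := by
  intro x hx
  simp only [coe_vecFunctionalSL_apply, vecFunctional_apply]
  rw [ContinuousLinearMap.star_eq_adjoint, ContinuousLinearMap.adjoint_inner_right,
    inner_conj_symm]

theorem norm_le_norm_Psi {m : ↥(carrier M)} (hm : IsSelfAdjoint (m : H →L[ℂ] H)) :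
    ‖m‖ ≤ ‖Psi M m‖ := by
  refine (ContinuousLinearMap.norm_eq_iSup_rayleighQuotient (m : H →L[ℂ] H)
    (ContinuousLinearMap.isSelfAdjoint_iff_isSymmetric.mp hm)).trans_le (ciSup_le fun ξ => ?_)
  let ω : ↥(predualSA M) := ⟨vecFunctionalSL M ξ ξ, vecFunctionalSL_self_mem_predualSA M ξ⟩
  have hω : ‖ω‖ ≤ ‖ξ‖ ^ 2 := (norm_vecFunctional_le M ξ ξ).trans_eq (sq _).symm
  have hre : (m : H →L[ℂ] H).reApplyInnerSelf ξ = Psi M m ω := by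
    rw [ContinuousLinearMap.reApplyInnerSelf_apply, ← inner_conj_symm, RCLike.conj_re]
    rfl
  rw [ContinuousLinearMap.rayleighQuotient, abs_div, abs_sq, hre]
  exact div_le_of_le_mul₀ (by positivity) (norm_nonneg _)
    (((Psi M m).le_opNorm ω).trans (by gcongr))

theorem exists_isSelfAdjoint_Psi_eq (f : ↥(predualSA M) →L[ℝ] ℝ) :
    ∃ m : ↥(carrier M), IsSelfAdjoint (m : H →L[ℂ] H) ∧ Psi M m = f := by
  obtain ⟨g, hg, -⟩ := exists_extension_norm_eq (predualSA M) f
  let F : ↥(predual M) →L[ℂ] ℂ := StrongDual.extendRCLike g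
  refine ⟨⟨ℜ (dualToOperator F), realPart_mem_carrier M (dualToOperator_mem M F)⟩,
    (ℜ (dualToOperator F)).2, ?_⟩
  rw [Psi_realPart M (dualToOperator_mem M F)]
  ext ω
  change (((ω : ↥(predual M)) : ↥(carrier M) →L[ℂ] ℂ) _).re = f ω
  rw [← apply_eq_apply_dualToOperator]
  exact (StrongDual.re_extendRCLike_apply (𝕜 := ℂ) g _).trans (hg ω)

theorem psi_surjective_isometry :
    (∀ (m : ↥(carrier M)) (ω : ↥(predualSA M)),
      Psi M m ω = (((ω : ↥(predual M)) : ↥(carrier M) →L[ℂ] ℂ) m).re) ∧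
    (∀ m₁ m₂ : ↥(carrier M), Psi M (m₁ + m₂) = Psi M m₁ + Psi M m₂) ∧
    (∀ (r : ℝ) (m : ↥(carrier M)), Psi M (r • m) = r • Psi M m) ∧
    (∀ m : ↥(carrier M), IsSelfAdjoint (m : H →L[ℂ] H) → ‖Psi M m‖ = ‖m‖) ∧
    (∀ f : ↥(predualSA M) →L[ℝ] ℝ,
      ∃ m : ↥(carrier M), IsSelfAdjoint (m : H →L[ℂ] H) ∧ Psi M m = f) := by
  refine ⟨fun _ _ => rfl, fun m₁ m₂ => ?_, fun r m => ?_,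
    fun m hm => (norm_Psi_le M m).antisymm (norm_le_norm_Psi M hm), exists_isSelfAdjoint_Psi_eq M⟩
  · ext ω
    simp [Psi]
  · ext ω
    simp [Psi]

end Paper
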